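/- arXiv:2208.09951 — 4 statements merged into one kernel-verified Lean document; each statement's English description precedes it below -/
import Mathlib

section
/- Let M be a maximal group-fair matching in a bipartite graph where each item belongs to at most Δ groups, and let (y, w) be the dual assignment where y_{ap} = 1 iff (a,p) ∈ M and w_{p,h} = 1 iff the group-h constraint at p is tight. Then the dual objective Σ_{p,h} u_{p,h}·w_{p,h} + Σ_{(a,p)} y_{ap} is at most (Δ+1)·|M|. -/
/-!
A tight constraint `(p, h)` contributes `u p h`, which is then the number of matched edges at `p`
from group `h`; a slack one contributes nothing. So the `w`-part is at most the number of pairs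
(matched edge `(a, p)`, group containing `a`), and each edge lies in at most `Δ` such pairs.
-/

open Finset

lemma mul_ite_eq_le (c u : ℕ) : u * (if c = u then 1 else 0) ≤ c := by
  split_ifs with h <;> simp [h]

lemma sum_card_filter_snd_eq_and {α β : Type*} [Fintype β] [DecidableEq β]
    (s : Finset (α × β)) (q : α × β → Prop) [DecidablePred q] :
    ∑ b : β, #(s.filter (fun e => e.2 = b ∧ q e)) = #(s.filter q) := by
  rw [card_eq_sum_card_fiberwise (f := Prod.snd) (t := univ) (by simp)]
  simp only [filter_filter, and_comm]

lemma sum_card_filter_le_card_mul {α ι : Type*} (s : Finset α) (t : Finset ι)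
    (r : α → ι → Prop) [∀ a i, Decidable (r a i)] {Δ : ℕ}
    (hΔ : ∀ a ∈ s, #(t.filter (r a)) ≤ Δ) :
    ∑ i ∈ t, #(s.filter (r · i)) ≤ #s * Δ :=
  calc ∑ i ∈ t, #(s.bipartiteBelow r i)
      = ∑ a ∈ s, #(t.bipartiteAbove r a) :=
        (sum_card_bipartiteAbove_eq_sum_card_bipartiteBelow r).symm
    _ ≤ #s • Δ := sum_le_card_nsmul _ _ _ hΔ

theorem stmt_12_general {A P : Type*} [Fintype P] [DecidableEq A] [DecidableEq P]
    (χ : ℕ) (grp : Fin χ → Finset A) (Δ : ℕ)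
    (u : P → Fin χ → ℕ)
    (hΔ : ∀ a : A, (Finset.univ.filter (fun h => a ∈ grp h)).card ≤ Δ)
    (M : Finset (A × P)) :
    (∑ p : P, ∑ h : Fin χ,
        u p h * (if (M.filter (fun e => e.2 = p ∧ e.1 ∈ grp h)).card = u p h then 1 else 0))
      + M.card ≤ (Δ + 1) * M.card :=
  calc _ ≤ (∑ p : P, ∑ h : Fin χ, #(M.filter (fun e => e.2 = p ∧ e.1 ∈ grp h))) + #M := by
        gcongr with p _ h _
        exact mul_ite_eq_le _ _
    _ = (∑ h : Fin χ, #(M.filter (fun e => e.1 ∈ grp h))) + #M := by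
        rw [sum_comm]
        simp only [sum_card_filter_snd_eq_and]
    _ ≤ #M * Δ + #M := by
        gcongr
        exact sum_card_filter_le_card_mul M univ (fun e h => e.1 ∈ grp h) fun e _ => hΔ e.1
    _ = (Δ + 1) * #M := by ring

theorem stmt_12 {A P : Type*} [Fintype A] [Fintype P] [DecidableEq A] [DecidableEq P]
    (χ : ℕ) (E : Finset (A × P)) (grp : Fin χ → Finset A) (Δ : ℕ)
    (u : P → Fin χ → ℕ)
    (hΔ : ∀ a : A, (Finset.univ.filter (fun h => a ∈ grp h)).card ≤ Δ)
    (M : Finset (A × P)) (hME : M ⊆ E)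
    (hmatch : ∀ a : A, (M.filter (fun e => e.1 = a)).card ≤ 1)
    (hgf : ∀ p h, (M.filter (fun e => e.2 = p ∧ e.1 ∈ grp h)).card ≤ u p h) :
    (∑ p : P, ∑ h : Fin χ,
        u p h * (if (M.filter (fun e => e.2 = p ∧ e.1 ∈ grp h)).card = u p h then 1 else 0))
      + M.card ≤ (Δ + 1) * M.card :=
  stmt_12_general χ grp Δ u hΔ M
end

section
/- Consider nonnegative quantities satisfying: ‖x^(i)‖₁ = ‖x‖₁ − Σ_{j=1}^{i} α^(j)‖M^(j)‖₁ (in the sense of the residual iteration), where in every iteration j, ‖M^(j)‖₁ ≥ ‖x^(j-1)‖₁/(Δ+1). If i_c is the first iteration at which ‖x^(i_c)‖₁ < ‖x‖₁/2^c, then Σ_{j=1}^{i_c} α^(j) ≤ 2c(Δ+1). -/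
/-!
Write `S j = ‖x^(j)‖₁` and `a j = α^(j) / (Δ + 1)`. The hypothesis on `M^(j)` gives
`a j * S (j-1) ≤ S (j-1) - S j`, i.e. each iteration removes at least an `a j` fraction of the
residual mass. While the residual is positive this costs `a j ≤ log S (j-1) - log S j`, so the
iterations before `i_c` telescope to at most `log (S 0 / S (i_c - 1)) ≤ c log 2`, and the last
iteration alone has `a i_c ≤ 1`. Hence `∑ a j ≤ c log 2 + 1 ≤ 2c`.
-/

open Finset Real

lemma le_log_sub_log_of_mul_le_sub {a x y : ℝ} (hx : 0 < x) (hy : 0 < y)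
    (h : a * x ≤ x - y) : a ≤ log x - log y := by
  have ha : a ≤ 1 - (x / y)⁻¹ := by
    rw [inv_div, le_sub_comm, div_le_iff₀ hx]
    linarith
  rw [← log_div hx.ne' hy.ne']
  exact ha.trans (one_sub_inv_le_log_of_pos (div_pos hx hy))

lemma le_one_of_mul_le_sub {a x y : ℝ} (hx : 0 < x) (hy : 0 ≤ y) (h : a * x ≤ x - y) :
    a ≤ 1 :=
  le_of_mul_le_mul_right (by linarith) hx

lemma sum_range_le_log_sub_log {S a : ℕ → ℝ} {n : ℕ} (hpos : ∀ j ≤ n, 0 < S j)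
    (hstep : ∀ j < n, a (j + 1) * S j ≤ S j - S (j + 1)) :
    ∑ j ∈ range n, a (j + 1) ≤ log (S 0) - log (S n) := by
  rw [← sum_range_sub' (fun j ↦ log (S j))]
  refine sum_le_sum fun j hj ↦ ?_
  have hj : j < n := mem_range.mp hj
  exact le_log_sub_log_of_mul_le_sub (hpos j hj.le) (hpos (j + 1) hj) (hstep j hj)

lemma sum_range_succ_le_log_sub_log_add_one {S a : ℕ → ℝ} {n : ℕ}
    (hpos : ∀ j ≤ n, 0 < S j) (hlast : 0 ≤ S (n + 1))
    (hstep : ∀ j ≤ n, a (j + 1) * S j ≤ S j - S (j + 1)) :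
    ∑ j ∈ range (n + 1), a (j + 1) ≤ log (S 0) - log (S n) + 1 := by
  rw [sum_range_succ]
  gcongr
  · exact sum_range_le_log_sub_log hpos fun j hj ↦ hstep j hj.le
  · exact le_one_of_mul_le_sub (hpos n le_rfl) hlast (hstep n le_rfl)

lemma log_sub_log_le_mul_log_two {s t : ℝ} {c : ℕ} (hs : 0 < s) (h : s / 2 ^ c ≤ t) :
    log s - log t ≤ c * log 2 := by
  have := log_le_log (by positivity) h
  rw [log_div hs.ne' (by positivity), log_pow] at this
  linarith

lemma mul_sum_le_sum_sub_sum_of_eq_sub_mul {E : Type*} [Fintype E] {x x' m : E → ℝ} {a d : ℝ}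
    (ha : 0 ≤ a) (hx' : ∀ e, x' e = x e - a * m e) (hm : (∑ e, x e) / d ≤ ∑ e, m e) :
    a / d * ∑ e, x e ≤ ∑ e, x e - ∑ e, x' e := by
  simp only [hx', sum_sub_distrib, ← mul_sum, sub_sub_cancel]
  rw [div_mul_eq_mul_div, mul_div_assoc]
  exact mul_le_mul_of_nonneg_left hm ha

theorem stmt_15_general {E : Type*} [Fintype E]
    (x M : ℕ → E → ℝ) (α : ℕ → ℝ) (Δ : ℝ) (c : ℕ) (ic : ℕ)
    (hΔ : 0 ≤ Δ) (hc : 1 ≤ c)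
    (hα : ∀ j, 0 < α j)
    (hiter : ∀ j e, x (j + 1) e = x j e - α (j + 1) * M (j + 1) e)
    (hxnn : ∀ j e, 0 ≤ x j e)
    (hfrac : ∀ j ∈ Finset.Icc 1 ic, (∑ e, x (j - 1) e) / (Δ + 1) ≤ ∑ e, M j e)
    (hfirst : ∑ e, x ic e < (∑ e, x 0 e) / 2 ^ c)
    (hbefore : ∀ j < ic, (∑ e, x 0 e) / 2 ^ c ≤ ∑ e, x j e) :
    ∑ j ∈ Finset.Icc 1 ic, α j ≤ 2 * c * (Δ + 1) := by
  set S : ℕ → ℝ := fun j ↦ ∑ e, x j e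
  have hΔ1 : 0 < Δ + 1 := by linarith
  have hS_nonneg (j : ℕ) : 0 ≤ S j := sum_nonneg fun e _ ↦ hxnn j e
  have hstep (j : ℕ) (hj : j < ic) : α (j + 1) / (Δ + 1) * S j ≤ S j - S (j + 1) :=
    mul_sum_le_sum_sub_sum_of_eq_sub_mul (hα _).le (hiter j)
      (hfrac (j + 1) (mem_Icc.mpr ⟨by omega, hj⟩))
  obtain _ | n := ic
  · simp only [Nat.zero_lt_one, Icc_eq_empty_of_lt, sum_empty]
    positivity
  have hthreshold : 0 < S 0 / 2 ^ c := (hS_nonneg _).trans_lt hfirst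
  have hS0 : 0 < S 0 := (div_pos_iff_of_pos_right (by positivity)).mp hthreshold
  have hpos (j : ℕ) (hj : j ≤ n) : 0 < S j := hthreshold.trans_le (hbefore j (by omega))
  have hsum := sum_range_succ_le_log_sub_log_add_one (a := fun j ↦ α j / (Δ + 1)) hpos
    (hS_nonneg _) fun j hj ↦ hstep j (by omega)
  have hlog := log_sub_log_le_mul_log_two hS0 (hbefore n (by omega))
  have hlog_two : log 2 ≤ 1 := by linarith [log_le_sub_one_of_pos two_pos]
  have hc' : (1 : ℝ) ≤ c := by exact_mod_cast hc
  calc ∑ j ∈ Icc 1 (n + 1), α j = (Δ + 1) * ∑ j ∈ range (n + 1), α (j + 1) / (Δ + 1) := by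
        rw [mul_sum, ← Ico_add_one_right_eq_Icc, sum_Ico_eq_sum_range, Nat.add_sub_cancel]
        refine sum_congr rfl fun j _ ↦ ?_
        rw [add_comm 1 j, mul_div_cancel₀ _ hΔ1.ne']
    _ ≤ (Δ + 1) * (2 * c) := by gcongr; nlinarith
    _ = 2 * c * (Δ + 1) := mul_comm _ _

theorem stmt_15 {E : Type*} [Fintype E]
    (x M : ℕ → E → ℝ) (α : ℕ → ℝ) (Δ : ℝ) (c : ℕ) (ic : ℕ)
    (hΔ : 0 ≤ Δ) (hc : 1 ≤ c)
    (hM : ∀ j e, 0 ≤ M j e)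
    (hα : ∀ j, 0 < α j)
    (hiter : ∀ j e, x (j + 1) e = x j e - α (j + 1) * M (j + 1) e)
    (hxnn : ∀ j e, 0 ≤ x j e)
    (hfrac : ∀ j ∈ Finset.Icc 1 ic, (∑ e, x (j - 1) e) / (Δ + 1) ≤ ∑ e, M j e)
    (hfirst : ∑ e, x ic e < (∑ e, x 0 e) / 2 ^ c)
    (hbefore : ∀ j < ic, (∑ e, x 0 e) / 2 ^ c ≤ ∑ e, x j e) :
    ∑ j ∈ Finset.Icc 1 ic, α j ≤ 2 * c * (Δ + 1) :=
  stmt_15_general x M α Δ c ic hΔ hc hα hiter hxnn hfrac hfirst hbefore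
end

section
/- Any basic feasible solution of the LP over variables x : E → [0,1] with constraints l_p ≤ Σ_{a∈N(p)} x_{ap} ≤ u_p for every platform p and l_{p,h} ≤ Σ_{a∈A_h} x_{ap} ≤ u_{p,h} for every platform p and group h, where all bounds l_p, u_p, l_{p,h}, u_{p,h} are integers and the groups A_h partition A, satisfies that Σ_{a∈N(p)} x_{ap} is an integer for every platform p. -/
/-!
The constraints of different platforms involve disjoint sets of variables, and at a fixed
platform the group constraints together with the platform constraint form a laminar family.
Hence at a vertex `x` every fractional coordinate can be perturbed: if two items of one group
are fractional at `p`, shift mass between them; otherwise each group sum containing a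
fractional item is itself fractional, hence strictly inside its integer bounds, and we shift
mass between two fractional items of `p` or, if there is only one, move it alone (the platform
sum is then fractional too). A vertex admits no such two-sided perturbation, so `x` is
integral, and so are its platform sums.
-/

/-- Feasibility for the group-fair matching LP with platform bounds `lp, up` and
group bounds `lph, uph`, where variables live on edges `E` (and are zero off `E`). -/
def GFFeasible {A P : Type*} [Fintype A] [Fintype P] [DecidableEq A] [DecidableEq P]
    {χ : ℕ} (E : Finset (A × P)) (grp : Fin χ → Finset A)
    (lp up : P → ℤ) (lph uph : P → Fin χ → ℤ) (x : A × P → ℝ) : Prop :=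
  (∀ e ∈ E, 0 ≤ x e ∧ x e ≤ 1) ∧ (∀ e, e ∉ E → x e = 0) ∧
  (∀ p : P, (lp p : ℝ) ≤ ∑ a ∈ Finset.univ.filter (fun a => (a, p) ∈ E), x (a, p) ∧
      ∑ a ∈ Finset.univ.filter (fun a => (a, p) ∈ E), x (a, p) ≤ (up p : ℝ)) ∧
  (∀ p h, (lph p h : ℝ) ≤ ∑ a ∈ grp h, x (a, p) ∧
      ∑ a ∈ grp h, x (a, p) ≤ (uph p h : ℝ))

open Finset Filter Topology

theorem sum_add_smul_apply {ι κ : Type*} (t : Finset ι) (f : ι → κ) (x d : κ → ℝ) (ε : ℝ) :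
    ∑ i ∈ t, (x + ε • d) (f i) = ∑ i ∈ t, x (f i) + ε * ∑ i ∈ t, d (f i) := by
  simp only [Pi.add_apply, Pi.smul_apply, smul_eq_mul, sum_add_distrib, mul_sum]

theorem sum_single_apply {A P : Type*} [DecidableEq A] [DecidableEq P] (t : Finset A) (a₀ : A)
    (p q : P) (c : ℝ) :
    ∑ a ∈ t, (Pi.single (a₀, p) c : A × P → ℝ) (a, q) = if a₀ ∈ t ∧ q = p then c else 0 := by
  by_cases hq : q = p
  · subst hq
    simp [Pi.single_apply, Prod.ext_iff, sum_ite_eq']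
  · simp [Prod.ext_iff, hq]

theorem eventually_le_add_mul_le {l u : ℤ} {s v : ℝ} (hl : (l : ℝ) ≤ s) (hu : s ≤ u)
    (hv : v ≠ 0 → s ∉ (Int.castAddHom ℝ).range) :
    ∀ᶠ ε in 𝓝 (0 : ℝ), (l : ℝ) ≤ s + ε * v ∧ s + ε * v ≤ u := by
  rcases eq_or_ne v 0 with rfl | hv0
  · simp [hl, hu]
  have hs := hv hv0
  have hl' : (l : ℝ) < s := hl.lt_of_ne fun h => hs ⟨l, h⟩
  have hu' : s < u := hu.lt_of_ne fun h => hs ⟨u, h.symm⟩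
  have hcont : Tendsto (fun ε : ℝ => s + ε * v) (𝓝 0) (𝓝 s) := by
    simpa using ((tendsto_id (x := 𝓝 (0 : ℝ))).mul_const v).const_add s
  exact hcont (Icc_mem_nhds hl' hu')

section FractionalDirection

variable {A P : Type*} [Fintype A] [DecidableEq A] [DecidableEq P] {χ : ℕ}
  {E : Finset (A × P)} {grp : Fin χ → Finset A} {x d : A × P → ℝ}

/-- As all bounds are integers, `d` moves only quantities whose bounds are not tight. -/
def IsFractionalDirection (E : Finset (A × P)) (grp : Fin χ → Finset A) (x d : A × P → ℝ) :
    Prop :=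
  (∀ e, d e ≠ 0 → x e ∉ (Int.castAddHom ℝ).range) ∧
  (∀ p, ∑ a ∈ univ.filter (fun a => (a, p) ∈ E), d (a, p) ≠ 0 →
      ∑ a ∈ univ.filter (fun a => (a, p) ∈ E), x (a, p) ∉ (Int.castAddHom ℝ).range) ∧
  (∀ p h, ∑ a ∈ grp h, d (a, p) ≠ 0 → ∑ a ∈ grp h, x (a, p) ∉ (Int.castAddHom ℝ).range)

theorem isFractionalDirection_single {a₀ : A} {p : P}
    (h₀ : x (a₀, p) ∉ (Int.castAddHom ℝ).range)
    (hplat : ∑ a ∈ univ.filter (fun a => (a, p) ∈ E), x (a, p) ∉ (Int.castAddHom ℝ).range)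
    (hgrp : ∀ h, a₀ ∈ grp h → ∑ a ∈ grp h, x (a, p) ∉ (Int.castAddHom ℝ).range) :
    IsFractionalDirection E grp x (Pi.single (a₀, p) 1) := by
  refine ⟨fun e he => ?_, fun q hq => ?_, fun q h hq => ?_⟩
  · obtain rfl : e = (a₀, p) := by_contra fun hne => he (Pi.single_eq_of_ne hne _)
    exact h₀
  · rw [sum_single_apply] at hq
    obtain ⟨-, rfl⟩ := (ite_ne_right_iff.1 hq).1
    exact hplat
  · rw [sum_single_apply] at hq
    obtain ⟨hmem, rfl⟩ := (ite_ne_right_iff.1 hq).1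
    exact hgrp h hmem

variable [Fintype P] {lp up : P → ℤ} {lph uph : P → Fin χ → ℤ}

theorem GFFeasible.mem_of_notMem_range (hx : GFFeasible E grp lp up lph uph x) {e : A × P}
    (he : x e ∉ (Int.castAddHom ℝ).range) : e ∈ E :=
  by_contra fun h => he ⟨0, by simp [hx.2.1 e h]⟩

theorem GFFeasible.eventually_add_smul (hx : GFFeasible E grp lp up lph uph x)
    (hd : IsFractionalDirection E grp x d) :
    ∀ᶠ ε in 𝓝 (0 : ℝ), GFFeasible E grp lp up lph uph (x + ε • d) := by
  have hdoff : ∀ e ∉ E, d e = 0 := fun e he =>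
    by_contra fun hne => he (hx.mem_of_notMem_range (hd.1 e hne))
  obtain ⟨hbox, hoff, hplat, hgrp⟩ := hx
  obtain ⟨hde, hdp, hdg⟩ := hd
  have hbox' : ∀ e ∈ E, ∀ᶠ ε in 𝓝 (0 : ℝ),
      ((0 : ℤ) : ℝ) ≤ x e + ε * d e ∧ x e + ε * d e ≤ ((1 : ℤ) : ℝ) := fun e he =>
    eventually_le_add_mul_le (by simpa using (hbox e he).1) (by simpa using (hbox e he).2)
      (hde e)
  have hplat' := fun p => eventually_le_add_mul_le (hplat p).1 (hplat p).2 (hdp p)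
  have hgrp' := fun p h => eventually_le_add_mul_le (hgrp p h).1 (hgrp p h).2 (hdg p h)
  filter_upwards [(eventually_all_finset E).2 hbox', eventually_all.2 hplat',
    eventually_all.2 fun p => eventually_all.2 (hgrp' p)] with ε hε hεp hεg
  exact ⟨fun e he => by simpa using hε e he, fun e he => by simp [hoff e he, hdoff e he],
    fun p => by simpa only [sum_add_smul_apply] using hεp p,
    fun p h => by simpa only [sum_add_smul_apply] using hεg p h⟩

/-- `x ± ε d` are feasible for small `ε > 0`, and `x` is their midpoint. -/
theorem eq_zero_of_isFractionalDirection (hx : GFFeasible E grp lp up lph uph x)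
    (hvertex : ∀ (y z : A × P → ℝ) (t : ℝ), GFFeasible E grp lp up lph uph y →
      GFFeasible E grp lp up lph uph z → 0 < t → t < 1 →
      x = (fun e => t * y e + (1 - t) * z e) → y = z)
    (hd : IsFractionalDirection E grp x d) : d = 0 := by
  have hplus := hx.eventually_add_smul hd
  have hminus := (continuous_neg.tendsto' (0 : ℝ) 0 neg_zero).eventually hplus
  obtain ⟨ε, ⟨hεp, hεm⟩, hε⟩ :=
    (((hplus.and hminus).filter_mono nhdsWithin_le_nhds).and
      (self_mem_nhdsWithin (s := Set.Ioi (0 : ℝ)))).exists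
  have heq := hvertex _ _ (1 / 2) hεp hεm (by norm_num) (by norm_num) (by ext e; simp only [Pi.add_apply, Pi.smul_apply, smul_eq_mul]; ring)
  funext e
  have he := congrFun heq e
  simp only [Pi.add_apply, Pi.smul_apply, smul_eq_mul, neg_mul, add_right_inj] at he
  exact (mul_eq_zero.1 (by linarith)).resolve_left hε.ne'

theorem isFractionalDirection_single_sub_single (hx : GFFeasible E grp lp up lph uph x)
    {a₀ a₁ : A} {p : P} (h₀ : x (a₀, p) ∉ (Int.castAddHom ℝ).range)
    (h₁ : x (a₁, p) ∉ (Int.castAddHom ℝ).range)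
    (hgrp : ∀ h, ¬(a₀ ∈ grp h ↔ a₁ ∈ grp h) →
      ∑ a ∈ grp h, x (a, p) ∉ (Int.castAddHom ℝ).range) :
    IsFractionalDirection E grp x (Pi.single (a₀, p) 1 - Pi.single (a₁, p) 1) := by
  have hsum : ∀ (t : Finset A) (q : P),
      ∑ a ∈ t, (Pi.single (a₀, p) 1 - Pi.single (a₁, p) 1 : A × P → ℝ) (a, q) =
        (if a₀ ∈ t ∧ q = p then 1 else 0) - (if a₁ ∈ t ∧ q = p then 1 else 0) := by
    intro t q
    simp only [Pi.sub_apply, sum_sub_distrib, sum_single_apply]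
  refine ⟨fun e he => ?_, fun q hq => ?_, fun q h hq => ?_⟩
  · by_cases he₀ : e = (a₀, p)
    · exact he₀ ▸ h₀
    · obtain rfl : e = (a₁, p) := by_contra fun he₁ => he (by simp [he₀, he₁])
      exact h₁
  · have hE₀ := hx.mem_of_notMem_range h₀
    have hE₁ := hx.mem_of_notMem_range h₁
    rw [hsum] at hq
    by_cases hqp : q = p
    · subst hqp
      simp [hE₀, hE₁] at hq
    · simp [hqp] at hq
  · rw [hsum] at hq
    by_cases hqp : q = p
    · subst hqp
      exact hgrp h fun hiff => hq (by simp [hiff])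
    · simp [hqp] at hq

theorem mem_range_of_mem_grp (hx : GFFeasible E grp lp up lph uph x)
    (hdisj : ∀ h h' : Fin χ, h ≠ h' → Disjoint (grp h) (grp h'))
    (hrigid : ∀ d, IsFractionalDirection E grp x d → d = 0)
    {h : Fin χ} {a₀ a₁ : A} {p : P} (h₀ : a₀ ∈ grp h) (h₁ : a₁ ∈ grp h) (hne : a₀ ≠ a₁)
    (hfrac : x (a₀, p) ∉ (Int.castAddHom ℝ).range) : x (a₁, p) ∈ (Int.castAddHom ℝ).range := by
  by_contra hfrac₁
  have hmem_iff : ∀ {a} h', a ∈ grp h → (a ∈ grp h' ↔ h' = h) := fun h' ha =>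
    ⟨fun ha' => by_contra fun hh => disjoint_left.1 (hdisj h' h hh) ha' ha, fun hh => hh ▸ ha⟩
  have hd := hrigid _ <| isFractionalDirection_single_sub_single hx hfrac hfrac₁
    fun h' hiff => (hiff ((hmem_iff h' h₀).trans (hmem_iff h' h₁).symm)).elim
  simpa [hne] using congrFun hd (a₀, p)

/-- By `mem_range_of_mem_grp`, `a₀` is the only fractional term of its group sum. -/
theorem sum_grp_notMem_range (hx : GFFeasible E grp lp up lph uph x)
    (hdisj : ∀ h h' : Fin χ, h ≠ h' → Disjoint (grp h) (grp h'))
    (hrigid : ∀ d, IsFractionalDirection E grp x d → d = 0)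
    {h : Fin χ} {a₀ : A} {p : P} (h₀ : a₀ ∈ grp h)
    (hfrac : x (a₀, p) ∉ (Int.castAddHom ℝ).range) :
    ∑ a ∈ grp h, x (a, p) ∉ (Int.castAddHom ℝ).range := by
  have hrest : ∑ a ∈ (grp h).erase a₀, x (a, p) ∈ (Int.castAddHom ℝ).range :=
    sum_mem fun a ha =>
      mem_range_of_mem_grp hx hdisj hrigid h₀ (mem_of_mem_erase ha) (ne_of_mem_erase ha).symm hfrac
  rwa [← add_sum_erase _ _ h₀, AddSubgroup.add_mem_cancel_right _ hrest]

theorem eq_of_notMem_range (hx : GFFeasible E grp lp up lph uph x)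
    (hdisj : ∀ h h' : Fin χ, h ≠ h' → Disjoint (grp h) (grp h'))
    (hrigid : ∀ d, IsFractionalDirection E grp x d → d = 0)
    {a₀ a₁ : A} {p : P} (h₀ : x (a₀, p) ∉ (Int.castAddHom ℝ).range)
    (h₁ : x (a₁, p) ∉ (Int.castAddHom ℝ).range) : a₀ = a₁ := by
  by_contra hne
  have hd := hrigid _ <| isFractionalDirection_single_sub_single hx h₀ h₁ fun h hiff => by
    obtain ha | ha : a₀ ∈ grp h ∨ a₁ ∈ grp h := by tauto
    · exact sum_grp_notMem_range hx hdisj hrigid ha h₀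
    · exact sum_grp_notMem_range hx hdisj hrigid ha h₁
  simpa [hne] using congrFun hd (a₀, p)

theorem apply_mem_range (hx : GFFeasible E grp lp up lph uph x)
    (hdisj : ∀ h h' : Fin χ, h ≠ h' → Disjoint (grp h) (grp h'))
    (hrigid : ∀ d, IsFractionalDirection E grp x d → d = 0) (a : A) (p : P) :
    x (a, p) ∈ (Int.castAddHom ℝ).range := by
  by_contra hfrac
  have hE : a ∈ univ.filter (fun a => (a, p) ∈ E) := by
    simpa using hx.mem_of_notMem_range hfrac
  have hrest : ∑ b ∈ (univ.filter (fun a => (a, p) ∈ E)).erase a, x (b, p) ∈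
      (Int.castAddHom ℝ).range :=
    sum_mem fun b hb => by_contra fun hb' =>
      ne_of_mem_erase hb (eq_of_notMem_range hx hdisj hrigid hb' hfrac)
  have hplat :
      ∑ b ∈ univ.filter (fun a => (a, p) ∈ E), x (b, p) ∉ (Int.castAddHom ℝ).range := by
    rwa [← add_sum_erase _ _ hE, AddSubgroup.add_mem_cancel_right _ hrest]
  have hd := hrigid _ <| isFractionalDirection_single hfrac hplat
    fun h ha => sum_grp_notMem_range hx hdisj hrigid ha hfrac
  simpa using congrFun hd (a, p)

end FractionalDirection

theorem stmt_17_general {A P : Type*} [Fintype A] [Fintype P] [DecidableEq A] [DecidableEq P]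
    (χ : ℕ) (E : Finset (A × P)) (grp : Fin χ → Finset A)
    (hdisj : ∀ h h' : Fin χ, h ≠ h' → Disjoint (grp h) (grp h'))
    (lp up : P → ℤ) (lph uph : P → Fin χ → ℤ)
    (x : A × P → ℝ)
    (hfeas : GFFeasible E grp lp up lph uph x)
    (hvertex : ∀ (y z : A × P → ℝ) (t : ℝ), GFFeasible E grp lp up lph uph y →
      GFFeasible E grp lp up lph uph z → 0 < t → t < 1 →
      x = (fun e => t * y e + (1 - t) * z e) → y = z) :
    ∀ p : P, ∃ m : ℤ,
      ∑ a ∈ Finset.univ.filter (fun a => (a, p) ∈ E), x (a, p) = (m : ℝ) := by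
  intro p
  have hrigid := fun d => eq_zero_of_isFractionalDirection (d := d) hfeas hvertex
  obtain ⟨m, hm⟩ := sum_mem fun a _ => apply_mem_range hfeas hdisj hrigid a p
  exact ⟨m, by simpa using hm.symm⟩

theorem stmt_17 {A P : Type*} [Fintype A] [Fintype P] [DecidableEq A] [DecidableEq P]
    (χ : ℕ) (E : Finset (A × P)) (grp : Fin χ → Finset A)
    (hdisj : ∀ h h' : Fin χ, h ≠ h' → Disjoint (grp h) (grp h'))
    (hpart : ∀ a : A, ∃ h, a ∈ grp h)
    (lp up : P → ℤ) (lph uph : P → Fin χ → ℤ)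
    (x : A × P → ℝ)
    (hfeas : GFFeasible E grp lp up lph uph x)
    (hvertex : ∀ (y z : A × P → ℝ) (t : ℝ), GFFeasible E grp lp up lph uph y →
      GFFeasible E grp lp up lph uph z → 0 < t → t < 1 →
      x = (fun e => t * y e + (1 - t) * z e) → y = z) :
    ∀ p : P, ∃ m : ℤ,
      ∑ a ∈ Finset.univ.filter (fun a => (a, p) ∈ E), x (a, p) = (m : ℝ) :=
  stmt_17_general χ E grp hdisj lp up lph uph x hfeas hvertex
end

section
/- When the groups are pairwise disjoint and all bounds l_p, u_p, l_{p,h}, u_{p,h} are integers, every vertex (basic feasible solution) of the polytope {x : E → [0,1] : l_p ≤ Σ_{a∈N(p)} x_{ap} ≤ u_p ∀p, l_{p,h} ≤ Σ_{a∈A_h} x_{ap} ≤ u_{p,h} ∀p,h} is integral, i.e., x_{ap} ∈ {0,1} for all edges. -/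
open Finset Filter Topology

lemma sum_mem_Ioo_of_unique_fractional {ι : Type*} [DecidableEq ι] {s : Finset ι} {f : ι → ℝ}
    {a : ι} {l u : ℤ} (ha : a ∈ s) (hfa : f a ∈ Set.Ioo 0 1)
    (h01 : ∀ c ∈ s, f c ∈ Set.Icc 0 1) (huniq : ∀ c ∈ s, f c ∈ Set.Ioo 0 1 → c = a)
    (hsum : ∑ c ∈ s, f c ∈ Set.Icc (l : ℝ) u) : ∑ c ∈ s, f c ∈ Set.Ioo (l : ℝ) u := by
  have hrest : ∑ c ∈ s.erase a, f c = (#{c ∈ s.erase a | f c = 1} : ℕ) := by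
    rw [← sum_boole]
    refine sum_congr rfl fun c hc => ?_
    obtain ⟨hc0, hc1⟩ := h01 c (mem_of_mem_erase hc)
    have hnot : f c ∉ Set.Ioo 0 1 := fun h => ne_of_mem_erase hc (huniq c (mem_of_mem_erase hc) h)
    rcases hc0.eq_or_lt with h0 | h0
    · simp [← h0]
    · have h1 : f c = 1 := by_contra fun h1 => hnot ⟨h0, lt_of_le_of_ne hc1 h1⟩
      simp [h1]
  rw [← add_sum_erase s f ha, hrest] at hsum ⊢
  set n : ℕ := #{c ∈ s.erase a | f c = 1}
  obtain ⟨hl, hu⟩ := hsum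
  obtain ⟨h0, h1⟩ := hfa
  have hln : l ≤ (n : ℤ) :=
    Int.lt_add_one_iff.mp (by exact_mod_cast (by linarith : (l : ℝ) < n + 1))
  have hnu : (n : ℤ) < u := by exact_mod_cast (by linarith : (n : ℝ) < u)
  have hln' : (l : ℝ) ≤ n := by exact_mod_cast hln
  have hnu' : (n : ℝ) + 1 ≤ u := by exact_mod_cast hnu
  constructor <;> linarith

lemma eventually_add_mul_mem_Icc {l u s c : ℝ} (hs : s ∈ Set.Icc l u)
    (hc : c = 0 ∨ s ∈ Set.Ioo l u) : ∀ᶠ ε in 𝓝 (0 : ℝ), s + ε * c ∈ Set.Icc l u := by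
  rcases hc with rfl | hs'
  · simp [hs]
  · have hcont : Continuous fun ε : ℝ => s + ε * c := by fun_prop
    exact (hcont.tendsto' 0 s (by simp)).eventually (isOpen_Ioo.mem_nhds hs')
      |>.mono fun _ h => Set.Ioo_subset_Icc_self h

def atPlatform {A P : Type*} [DecidableEq P] (p₀ : P) (v : A → ℝ) : A × P → ℝ :=
  fun e => if e.2 = p₀ then v e.1 else 0

@[simp]
lemma atPlatform_apply {A P : Type*} [DecidableEq P] (p₀ : P) (v : A → ℝ) (a : A) (p : P) :
    atPlatform p₀ v (a, p) = if p = p₀ then v a else 0 := rfl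

section

variable {A P : Type*} [Fintype A] [Fintype P] [DecidableEq A] [DecidableEq P] {χ : ℕ}
  {E : Finset (A × P)} {grp : Fin χ → Finset A} {lp up : P → ℤ} {lph uph : P → Fin χ → ℤ}
  {x : A × P → ℝ}

def IsSlackDirection (E : Finset (A × P)) (grp : Fin χ → Finset A) (lp up : P → ℤ)
    (lph uph : P → Fin χ → ℤ) (x : A × P → ℝ) (p₀ : P) (v : A → ℝ) : Prop :=
  (∀ a, v a ≠ 0 → x (a, p₀) ∈ Set.Ioo 0 1) ∧
  (∑ a with (a, p₀) ∈ E, v a = 0 ∨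
    ∑ a with (a, p₀) ∈ E, x (a, p₀) ∈ Set.Ioo (lp p₀ : ℝ) (up p₀)) ∧
  ∀ h, ∑ a ∈ grp h, v a = 0 ∨ ∑ a ∈ grp h, x (a, p₀) ∈ Set.Ioo (lph p₀ h : ℝ) (uph p₀ h)

namespace GFFeasible

lemma mem_Icc (hfeas : GFFeasible E grp lp up lph uph x) (e : A × P) : x e ∈ Set.Icc 0 1 := by
  by_cases he : e ∈ E
  · exact hfeas.1 e he
  · simp [hfeas.2.1 e he]

lemma mem_of_mem_Ioo (hfeas : GFFeasible E grp lp up lph uph x) {e : A × P}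
    (he : x e ∈ Set.Ioo 0 1) : e ∈ E :=
  by_contra fun h => he.1.ne' (hfeas.2.1 e h)

lemma platform_mem_Ioo (hfeas : GFFeasible E grp lp up lph uph x) {a : A} {p : P}
    (ha : x (a, p) ∈ Set.Ioo 0 1) (huniq : ∀ c, x (c, p) ∈ Set.Ioo 0 1 → c = a) :
    ∑ c with (c, p) ∈ E, x (c, p) ∈ Set.Ioo (lp p : ℝ) (up p) :=
  sum_mem_Ioo_of_unique_fractional (by simpa using hfeas.mem_of_mem_Ioo ha) ha
    (fun _ _ => hfeas.mem_Icc _) (fun c _ => huniq c) (hfeas.2.2.1 p)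

lemma group_mem_Ioo (hfeas : GFFeasible E grp lp up lph uph x) {a : A} {p : P} {h : Fin χ}
    (hah : a ∈ grp h) (ha : x (a, p) ∈ Set.Ioo 0 1)
    (huniq : ∀ c ∈ grp h, x (c, p) ∈ Set.Ioo 0 1 → c = a) :
    ∑ c ∈ grp h, x (c, p) ∈ Set.Ioo (lph p h : ℝ) (uph p h) :=
  sum_mem_Ioo_of_unique_fractional hah ha (fun _ _ => hfeas.mem_Icc _) huniq (hfeas.2.2.2 p h)

lemma eventually_add_smul_atPlatform (hfeas : GFFeasible E grp lp up lph uph x) {p₀ : P}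
    {v : A → ℝ} (hv : IsSlackDirection E grp lp up lph uph x p₀ v) :
    ∀ᶠ ε in 𝓝 (0 : ℝ), GFFeasible E grp lp up lph uph (x + ε • atPlatform p₀ v) := by
  obtain ⟨hbox, hzero, hplat, hgrp⟩ := hfeas
  obtain ⟨hvfrac, hvplat, hvgrp⟩ := hv
  have hsum (s : Finset A) (p : P) (ε : ℝ) :
      ∑ a ∈ s, (x + ε • atPlatform p₀ v) (a, p) =
        ∑ a ∈ s, x (a, p) + ε * if p = p₀ then ∑ a ∈ s, v a else 0 := by
    split_ifs with hp <;> simp [hp, sum_add_distrib, mul_sum]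
  have hw (a : A) (p : P) : atPlatform p₀ v (a, p) = 0 ∨ x (a, p) ∈ Set.Ioo 0 1 := by
    by_cases hp : p = p₀
    · subst hp
      simpa using (em (v a = 0)).imp_right (hvfrac a)
    · simp [hp]
  have hbox' : ∀ e ∈ E, ∀ᶠ ε in 𝓝 (0 : ℝ), (x + ε • atPlatform p₀ v) e ∈ Set.Icc 0 1 := by
    rintro ⟨a, p⟩ he
    exact eventually_add_mul_mem_Icc (hbox _ he) (hw a p)
  have hplat' (p : P) : ∀ᶠ ε in 𝓝 (0 : ℝ),
      ∑ a with (a, p) ∈ E, (x + ε • atPlatform p₀ v) (a, p) ∈ Set.Icc (lp p : ℝ) (up p) := by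
    simp only [hsum]
    refine eventually_add_mul_mem_Icc (hplat p) ?_
    split_ifs with hp
    · exact hp ▸ hvplat
    · exact Or.inl rfl
  have hgrp' (p : P) (h : Fin χ) : ∀ᶠ ε in 𝓝 (0 : ℝ),
      ∑ a ∈ grp h, (x + ε • atPlatform p₀ v) (a, p) ∈ Set.Icc (lph p h : ℝ) (uph p h) := by
    simp only [hsum]
    refine eventually_add_mul_mem_Icc (hgrp p h) ?_
    split_ifs with hp
    · exact hp ▸ hvgrp h
    · exact Or.inl rfl
  filter_upwards [(eventually_all_finset E).2 hbox', eventually_all.2 hplat',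
    eventually_all.2 fun p => eventually_all.2 (hgrp' p)] with ε hε₁ hε₂ hε₃
  refine ⟨hε₁, fun ⟨a, p⟩ he => ?_, hε₂, hε₃⟩
  have hxe := hzero _ he
  simp [hxe, (hw a p).resolve_right fun h => h.1.ne' hxe]

end GFFeasible

lemma eq_zero_of_eventually_gfFeasible
    (hvertex : ∀ y z : A × P → ℝ, GFFeasible E grp lp up lph uph y →
      GFFeasible E grp lp up lph uph z →
      x = (fun e => (1 / 2) * y e + (1 / 2) * z e) → y = z)
    {w : A × P → ℝ} (hw : ∀ᶠ ε in 𝓝 (0 : ℝ), GFFeasible E grp lp up lph uph (x + ε • w)) :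
    w = 0 := by
  have hw' : ∀ᶠ ε in 𝓝 (0 : ℝ), GFFeasible E grp lp up lph uph (x + (-ε) • w) :=
    (continuous_neg.tendsto' 0 0 neg_zero).eventually hw
  obtain ⟨ε, ⟨hy, hz⟩, hε⟩ :=
    ((hw.and hw').filter_mono nhdsWithin_le_nhds).and self_mem_nhdsWithin |>.exists
      (f := 𝓝[≠] (0 : ℝ))
  have hyz := hvertex _ _ hy hz <| by
    ext e
    simp only [Pi.add_apply, Pi.smul_apply, smul_eq_mul]
    ring
  funext e
  have he := congrFun hyz e
  simp only [Pi.add_apply, Pi.smul_apply, smul_eq_mul, neg_mul, add_right_inj] at he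
  exact (mul_eq_zero.mp (self_eq_neg.mp he)).resolve_left hε

lemma eq_or_eq_of_single_sub_single_ne_zero {ι : Type*} [DecidableEq ι] {a b c : ι}
    (h : (Pi.single b 1 - Pi.single c 1 : ι → ℝ) a ≠ 0) : a = b ∨ a = c := by
  by_contra! hne
  simp [hne.1, hne.2] at h

namespace GFFeasible

variable {p₀ : P}

lemma isSlackDirection_single_sub_single_of_mem_group (hfeas : GFFeasible E grp lp up lph uph x)
    (hdisj : ∀ h h' : Fin χ, h ≠ h' → Disjoint (grp h) (grp h')) {b c : A} {h : Fin χ}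
    (hb : b ∈ grp h) (hc : c ∈ grp h) (hbf : x (b, p₀) ∈ Set.Ioo 0 1)
    (hcf : x (c, p₀) ∈ Set.Ioo 0 1) :
    IsSlackDirection E grp lp up lph uph x p₀ (Pi.single b 1 - Pi.single c 1) := by
  refine ⟨fun a ha => ?_, Or.inl ?_, fun h' => Or.inl ?_⟩
  · rcases eq_or_eq_of_single_sub_single_ne_zero ha with rfl | rfl <;> assumption
  · simp [sum_sub_distrib, hfeas.mem_of_mem_Ioo hbf, hfeas.mem_of_mem_Ioo hcf]
  · rcases eq_or_ne h h' with rfl | hne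
    · simp [sum_sub_distrib, hb, hc]
    · simp [sum_sub_distrib, disjoint_left.mp (hdisj h h' hne) hb,
        disjoint_left.mp (hdisj h h' hne) hc]

lemma isSlackDirection_single_sub_single (hfeas : GFFeasible E grp lp up lph uph x)
    (hatMostOne : ∀ h, ∀ b ∈ grp h, ∀ c ∈ grp h,
      x (b, p₀) ∈ Set.Ioo 0 1 → x (c, p₀) ∈ Set.Ioo 0 1 → b = c)
    {a b : A} (haf : x (a, p₀) ∈ Set.Ioo 0 1) (hbf : x (b, p₀) ∈ Set.Ioo 0 1) :
    IsSlackDirection E grp lp up lph uph x p₀ (Pi.single a 1 - Pi.single b 1) := by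
  refine ⟨fun c hc => ?_, Or.inl ?_, fun h => ?_⟩
  · rcases eq_or_eq_of_single_sub_single_ne_zero hc with rfl | rfl <;> assumption
  · simp [sum_sub_distrib, hfeas.mem_of_mem_Ioo haf, hfeas.mem_of_mem_Ioo hbf]
  · by_cases ha : a ∈ grp h
    · exact Or.inr (hfeas.group_mem_Ioo ha haf fun c hc hcf => hatMostOne h c hc a ha hcf haf)
    by_cases hb : b ∈ grp h
    · exact Or.inr (hfeas.group_mem_Ioo hb hbf fun c hc hcf => hatMostOne h c hc b hb hcf hbf)
    exact Or.inl (by simp [sum_sub_distrib, ha, hb])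

lemma isSlackDirection_single (hfeas : GFFeasible E grp lp up lph uph x) {a : A}
    (haf : x (a, p₀) ∈ Set.Ioo 0 1) (huniq : ∀ c, x (c, p₀) ∈ Set.Ioo 0 1 → c = a) :
    IsSlackDirection E grp lp up lph uph x p₀ (Pi.single a 1) := by
  refine ⟨fun c hc => ?_, Or.inr (hfeas.platform_mem_Ioo haf huniq), fun h => ?_⟩
  · rw [Pi.single_apply, ite_ne_right_iff] at hc
    exact hc.1 ▸ haf
  · by_cases ha : a ∈ grp h
    · exact Or.inr (hfeas.group_mem_Ioo ha haf fun c _ hcf => huniq c hcf)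
    · exact Or.inl (by simp [ha])

lemma exists_isSlackDirection (hfeas : GFFeasible E grp lp up lph uph x)
    (hdisj : ∀ h h' : Fin χ, h ≠ h' → Disjoint (grp h) (grp h')) {a : A}
    (haf : x (a, p₀) ∈ Set.Ioo 0 1) :
    ∃ v : A → ℝ, v ≠ 0 ∧ IsSlackDirection E grp lp up lph uph x p₀ v := by
  have single_sub_single_ne_zero {b c : A} (hbc : b ≠ c) :
      (Pi.single b 1 - Pi.single c 1 : A → ℝ) ≠ 0 :=
    fun h => by simpa [hbc.symm] using congrFun h b
  by_cases hpair : ∃ h, ∃ b ∈ grp h, ∃ c ∈ grp h, b ≠ c ∧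
      x (b, p₀) ∈ Set.Ioo 0 1 ∧ x (c, p₀) ∈ Set.Ioo 0 1
  · obtain ⟨h, b, hb, c, hc, hbc, hbf, hcf⟩ := hpair
    exact ⟨_, single_sub_single_ne_zero hbc,
      hfeas.isSlackDirection_single_sub_single_of_mem_group hdisj hb hc hbf hcf⟩
  push Not at hpair
  by_cases hother : ∃ b ≠ a, x (b, p₀) ∈ Set.Ioo 0 1
  · obtain ⟨b, hba, hbf⟩ := hother
    exact ⟨_, single_sub_single_ne_zero hba.symm, hfeas.isSlackDirection_single_sub_single
      (fun h b hb c hc hbf hcf => by_contra fun hbc => hpair h b hb c hc hbc hbf hcf) haf hbf⟩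
  push Not at hother
  exact ⟨_, by simp, hfeas.isSlackDirection_single haf
    fun c hcf => by_contra fun hca => hother c hca hcf⟩

end GFFeasible

end

theorem stmt_18_general {A P : Type*} [Fintype A] [Fintype P] [DecidableEq A] [DecidableEq P]
    (χ : ℕ) (E : Finset (A × P)) (grp : Fin χ → Finset A)
    (hdisj : ∀ h h' : Fin χ, h ≠ h' → Disjoint (grp h) (grp h'))
    (lp up : P → ℤ) (lph uph : P → Fin χ → ℤ)
    (x : A × P → ℝ)
    (hfeas : GFFeasible E grp lp up lph uph x)
    (hvertex : ∀ y z : A × P → ℝ, GFFeasible E grp lp up lph uph y →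
      GFFeasible E grp lp up lph uph z →
      x = (fun e => (1 / 2) * y e + (1 / 2) * z e) → y = z) :
    ∀ e ∈ E, x e = 0 ∨ x e = 1 := by
  rintro ⟨a, p⟩ he
  by_contra! hne
  have haf : x (a, p) ∈ Set.Ioo 0 1 :=
    ⟨(hfeas.1 _ he).1.lt_of_ne hne.1.symm, (hfeas.1 _ he).2.lt_of_ne hne.2⟩
  obtain ⟨v, hv, hslack⟩ := hfeas.exists_isSlackDirection hdisj haf
  have hw := eq_zero_of_eventually_gfFeasible hvertex (hfeas.eventually_add_smul_atPlatform hslack)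
  exact hv (funext fun c => by simpa using congrFun hw (c, p))

theorem stmt_18 {A P : Type*} [Fintype A] [Fintype P] [DecidableEq A] [DecidableEq P]
    (χ : ℕ) (E : Finset (A × P)) (grp : Fin χ → Finset A)
    (hdisj : ∀ h h' : Fin χ, h ≠ h' → Disjoint (grp h) (grp h'))
    (hpart : ∀ a : A, ∃ h, a ∈ grp h)
    (lp up : P → ℤ) (lph uph : P → Fin χ → ℤ)
    (x : A × P → ℝ)
    (hfeas : GFFeasible E grp lp up lph uph x)
    (hvertex : ∀ y z : A × P → ℝ, GFFeasible E grp lp up lph uph y →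
      GFFeasible E grp lp up lph uph z →
      x = (fun e => (1 / 2) * y e + (1 / 2) * z e) → y = z) :
    ∀ e ∈ E, x e = 0 ∨ x e = 1 :=
  stmt_18_general χ E grp hdisj lp up lph uph x hfeas hvertex
end
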